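/- Let τ₁(x,y) = x + iy + √3, L₁φ = (Dₓ² + (1/√3)Dₓ + (i/√3)Dᵧ) φ·τ₁, and G₁η = −(Dₓ² + (1/√3)Dₓ + (i/√3)Dᵧ) 1·η. Suppose η, φ : ℝ² → ℂ are smooth, η satisfies (−Dₓ² + Dₓ⁴ − Dᵧ²) η·τ₁ = 0 on ℝ², and φ satisfies, at every point where τ₁ ≠ 0, the third-order ODE 4∂ₓ³φ·τ₁ + (2√3 τ₁ − 12)∂ₓ²φ + (−4√3 + 12/τ₁)∂ₓφ = F₁ with F₁ = −2∂ₓ³η + 2√3 i ∂ₓ∂ᵧη − (6/τ₁)G₁η. Define Φ₀ = L₁φ − G₁η. Then at every point where τ₁ ≠ 0: ∂ₓ³Φ₀ = (−√3/2 + 6/τ₁)∂ₓ²Φ₀ + (1/τ₁)(2√3 − 15/τ₁)∂ₓΦ₀ + (1/τ₁²)(15/τ₁ − 2√3)Φ₀. -/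

import Mathlib

open Complex

/-- Hirota bilinear derivative `Dₓ^m Dᵧ^n f·g` for functions of `(x,y) ∈ ℝ²`. -/
noncomputable def hirota (m n : ℕ) (f g : ℝ × ℝ → ℂ) (p : ℝ × ℝ) : ℂ :=
  iteratedDeriv m (fun a =>
    iteratedDeriv n (fun b =>
      f (p.1 + a, p.2 + b) * g (p.1 - a, p.2 - b)) 0) 0

/-- `τ₁(x,y) = x + iy + √3`. -/
noncomputable def tau1 (p : ℝ × ℝ) : ℂ :=
  (p.1 : ℂ) + (p.2 : ℂ) * I + (Real.sqrt 3 : ℂ)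

/-- Partial derivative in x, for complex valued functions. -/
noncomputable def cdx (f : ℝ × ℝ → ℂ) (p : ℝ × ℝ) : ℂ :=
  deriv (fun x => f (x, p.2)) p.1

/-- Partial derivative in y, for complex valued functions. -/
noncomputable def cdy (f : ℝ × ℝ → ℂ) (p : ℝ × ℝ) : ℂ :=
  deriv (fun y => f (p.1, y)) p.2

/-- `L₁φ = (Dₓ² + (1/√3)Dₓ + (i/√3)Dᵧ) φ·τ₁`. -/
noncomputable def L1 (φ : ℝ × ℝ → ℂ) (p : ℝ × ℝ) : ℂ :=
  hirota 2 0 φ tau1 p + (1 / (Real.sqrt 3 : ℂ)) * hirota 1 0 φ tau1 p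
    + (I / (Real.sqrt 3 : ℂ)) * hirota 0 1 φ tau1 p

/-- `G₁η = −(Dₓ² + (1/√3)Dₓ + (i/√3)Dᵧ) 1·η`. -/
noncomputable def G1 (η : ℝ × ℝ → ℂ) (p : ℝ × ℝ) : ℂ :=
  -(hirota 2 0 (fun _ => 1) η p + (1 / (Real.sqrt 3 : ℂ)) * hirota 1 0 (fun _ => 1) η p
    + (I / (Real.sqrt 3 : ℂ)) * hirota 0 1 (fun _ => 1) η p)


/-! Every Hirota derivative in the hypotheses pairs a smooth function with the affine function `τ₁`
or with the constant `1`, so it collapses to ordinary partial derivatives, and each hypothesis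
becomes a polynomial identity in `τ₁` and the jets of `φ` and `η` inside the differential algebra
of smooth functions. Multiplied by `τ₁`, the ODE for `φ` holds off the single zero of `τ₁`, hence
everywhere by continuity, so it may be differentiated freely. Then `τ₁³` times the claimed ODE for
`Φ₀` is an explicit combination of this ODE, its derivatives `∂ₓ`, `∂ₓ²`, `∂ᵧ`, the bilinear
equation for `η` and its `∂ₓ`. -/

open scoped ContDiff

section SmoothFunctions

variable (E : Type*) [NormedAddCommGroup E] [NormedSpace ℝ E]

def smoothFunctions : Subalgebra ℂ (E → ℂ) where
  carrier := {f | ContDiff ℝ ∞ f}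
  mul_mem' {f g} (hf : ContDiff ℝ ∞ f) (hg : ContDiff ℝ ∞ g) := hf.mul hg
  add_mem' {f g} (hf : ContDiff ℝ ∞ f) (hg : ContDiff ℝ ∞ g) := hf.add hg
  algebraMap_mem' c := (contDiff_const : ContDiff ℝ ∞ fun _ : E => c)

variable {E}

instance : CoeFun (smoothFunctions E) fun _ => E → ℂ := ⟨Subtype.val⟩

theorem mem_smoothFunctions {f : E → ℂ} : f ∈ smoothFunctions E ↔ ContDiff ℝ ∞ f := Iff.rfl

theorem contDiff_coe_smoothFunctions (f : smoothFunctions E) : ContDiff ℝ ∞ f := f.2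

theorem differentiableAt_coe_smoothFunctions (f : smoothFunctions E) (p : E) :
    DifferentiableAt ℝ f p :=
  (contDiff_coe_smoothFunctions f).differentiable (by simp) p

noncomputable def fderivDerivation (v : E) :
    Derivation ℂ (smoothFunctions E) (smoothFunctions E) :=
  Derivation.mk'
    { toFun := fun f => ⟨fun p => fderiv ℝ f p v, mem_smoothFunctions.2 <|
        ((contDiff_coe_smoothFunctions f).fderiv_right (by simp)).clm_apply contDiff_const⟩
      map_add' := fun f g => by
        ext p
        simp [fderiv_add (differentiableAt_coe_smoothFunctions f p)
          (differentiableAt_coe_smoothFunctions g p)]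
      map_smul' := fun c f => by
        ext p
        simp [fderiv_const_smul (differentiableAt_coe_smoothFunctions f p)] }
    fun f g => by
      ext p
      simp [fderiv_mul (differentiableAt_coe_smoothFunctions f p)
        (differentiableAt_coe_smoothFunctions g p)]

theorem fderivDerivation_comm (v w : E) (f : smoothFunctions E) :
    fderivDerivation v (fderivDerivation w f) = fderivDerivation w (fderivDerivation v f) := by
  ext p
  have hf := contDiff_coe_smoothFunctions f
  have hd : DifferentiableAt ℝ (fderiv ℝ f) p :=
    (hf.fderiv_right (m := 1) (by decide)).differentiable (by simp) p
  change fderiv ℝ (fun q => fderiv ℝ f q w) p v = fderiv ℝ (fun q => fderiv ℝ f q v) p w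
  simpa [fderiv_clm_apply hd (differentiableAt_const _)] using
    hf.contDiffAt.isSymmSndFDerivAt (by simp; decide) v w

theorem hasDerivAt_comp_smoothFunctions (f : smoothFunctions E) {γ : ℝ → E} {γ' : E} {t : ℝ}
    (hγ : HasDerivAt γ γ' t) : HasDerivAt (fun s => f (γ s)) (fderivDerivation γ' f (γ t)) t :=
  (differentiableAt_coe_smoothFunctions f _).hasFDerivAt.comp_hasDerivAt t hγ

theorem hasDerivAt_add_smul (p v : E) (t : ℝ) : HasDerivAt (fun s : ℝ => p + s • v) v t := by
  simpa using ((hasDerivAt_id t).smul_const v).const_add p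

theorem iteratedDeriv_comp_add_smul (f : smoothFunctions E) (p v : E) (k : ℕ) :
    iteratedDeriv k (fun t : ℝ => f (p + t • v))
      = fun t : ℝ => ((fderivDerivation v)^[k] f) (p + t • v) := by
  induction k with
  | zero => rfl
  | succ k ih =>
    funext t
    rw [iteratedDeriv_succ, ih, Function.iterate_succ_apply']
    exact (hasDerivAt_comp_smoothFunctions _ (hasDerivAt_add_smul p v t)).deriv

theorem iteratedDeriv_comp_sub_smul (f : smoothFunctions E) (p v : E) (k : ℕ) :
    iteratedDeriv k (fun t : ℝ => f (p - t • v)) 0 = (-1) ^ k * ((fderivDerivation v)^[k] f) p := by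
  have h := iteratedDeriv_comp_neg k (fun t : ℝ => f (p + t • v)) 0
  simp only [neg_smul, ← sub_eq_add_neg, iteratedDeriv_comp_add_smul, neg_zero, zero_smul,
    add_zero] at h
  rw [h]
  simp

theorem iteratedDeriv_mul_affine (f : smoothFunctions E) (p v : E) (c d : ℂ) (k : ℕ) :
    iteratedDeriv k (fun t : ℝ => f (p + t • v) * (c + d * t))
      = fun t : ℝ => ((fderivDerivation v)^[k] f) (p + t • v) * (c + d * t)
        + k * d * ((fderivDerivation v)^[k - 1] f) (p + t • v) := by
  induction k with
  | zero => simp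
  | succ k ih =>
    funext t
    rw [iteratedDeriv_succ, ih]
    have hline := hasDerivAt_add_smul p v t
    have haffine : HasDerivAt (fun s : ℝ => c + d * s) d t := by
      simpa using ((hasDerivAt_id t).ofReal_comp.const_mul d).const_add c
    refine (((hasDerivAt_comp_smoothFunctions _ hline).mul haffine).add
      ((hasDerivAt_comp_smoothFunctions _ hline).const_mul _)).deriv.trans ?_
    rcases k with _ | k
    · simp [mul_comm]
    · simp only [Function.iterate_succ_apply', Nat.add_sub_cancel]
      push_cast
      ring

end SmoothFunctions

local notation "𝒮" => smoothFunctions (ℝ × ℝ)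
local notation "∂ₓ" => fderivDerivation ((1, 0) : ℝ × ℝ)
local notation "∂ᵧ" => fderivDerivation ((0, 1) : ℝ × ℝ)

theorem cdx_coe (f : 𝒮) : cdx f = ∂ₓ f := by
  funext p
  exact (hasDerivAt_comp_smoothFunctions f
    ((hasDerivAt_id p.1).prodMk (hasDerivAt_const _ p.2))).deriv

theorem cdy_coe (f : 𝒮) : cdy f = ∂ᵧ f := by
  funext p
  exact (hasDerivAt_comp_smoothFunctions f
    ((hasDerivAt_const _ p.1).prodMk (hasDerivAt_id p.2))).deriv

theorem tau1_add_smul (p v : ℝ × ℝ) (t : ℝ) :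
    tau1 (p + t • v) = tau1 p + (v.1 + v.2 * I) * t := by
  simp only [tau1, Prod.fst_add, Prod.snd_add, Prod.smul_fst, Prod.smul_snd, smul_eq_mul]
  push_cast
  ring

theorem tau1_sub_smul (p v : ℝ × ℝ) (t : ℝ) :
    tau1 (p - t • v) = tau1 p + -(v.1 + v.2 * I) * t := by
  rw [sub_eq_add_neg, ← neg_smul, tau1_add_smul]
  push_cast
  ring

theorem contDiff_tau1 : ContDiff ℝ ∞ tau1 := by
  have h : ContDiff ℝ ∞ fun x : ℝ => (x : ℂ) := ofRealCLM.contDiff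
  unfold tau1
  fun_prop

noncomputable def smoothTau1 : 𝒮 := ⟨tau1, contDiff_tau1⟩

theorem smoothTau1_apply (p : ℝ × ℝ) : smoothTau1 p = tau1 p := rfl

theorem fderivDerivation_smoothTau1 (v : ℝ × ℝ) :
    fderivDerivation v smoothTau1 = algebraMap ℂ 𝒮 (v.1 + v.2 * I) := by
  ext p
  have hline : HasDerivAt (fun t : ℝ => tau1 (p + t • v)) (v.1 + v.2 * I) 0 := by
    simp only [tau1_add_smul]
    simpa using ((hasDerivAt_id (0 : ℝ)).ofReal_comp.const_mul (v.1 + v.2 * I : ℂ)).const_add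
      (tau1 p)
  have h := hasDerivAt_comp_smoothFunctions smoothTau1 (hasDerivAt_add_smul p v 0)
  simp only [zero_smul, add_zero] at h
  exact h.unique hline

theorem dx_smoothTau1 : ∂ₓ smoothTau1 = 1 := by
  simp [fderivDerivation_smoothTau1]

theorem dy_smoothTau1 : ∂ᵧ smoothTau1 = algebraMap ℂ 𝒮 I := by
  simp [fderivDerivation_smoothTau1]

theorem hirota_x_eq_iteratedDeriv (m : ℕ) (f g : ℝ × ℝ → ℂ) (p : ℝ × ℝ) :
    hirota m 0 f g p
      = iteratedDeriv m (fun t : ℝ => f (p + t • (1, 0)) * g (p - t • (1, 0))) 0 := by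
  simp only [hirota, iteratedDeriv_zero]
  congr 1
  funext t
  congr 2 <;> ext <;> simp

theorem hirota_y_eq_iteratedDeriv (n : ℕ) (f g : ℝ × ℝ → ℂ) (p : ℝ × ℝ) :
    hirota 0 n f g p
      = iteratedDeriv n (fun t : ℝ => f (p + t • (0, 1)) * g (p - t • (0, 1))) 0 := by
  simp only [hirota, iteratedDeriv_zero]
  congr 1
  funext t
  congr 2 <;> ext <;> simp

theorem iteratedDeriv_mul_tau1 (f : 𝒮) (p v : ℝ × ℝ) (k : ℕ) :
    iteratedDeriv k (fun t : ℝ => f (p + t • v) * tau1 (p - t • v)) 0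
      = ((fderivDerivation v)^[k] f) p * tau1 p
        - k * (v.1 + v.2 * I) * ((fderivDerivation v)^[k - 1] f) p := by
  simp only [tau1_sub_smul, iteratedDeriv_mul_affine, zero_smul, add_zero, ofReal_zero, mul_zero]
  ring

theorem hirota_x_tau1 (f : 𝒮) (m : ℕ) (p : ℝ × ℝ) :
    hirota m 0 f tau1 p = (∂ₓ^[m] f) p * tau1 p - m * (∂ₓ^[m - 1] f) p := by
  rw [hirota_x_eq_iteratedDeriv, iteratedDeriv_mul_tau1]
  simp

theorem hirota_y_tau1 (f : 𝒮) (n : ℕ) (p : ℝ × ℝ) :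
    hirota 0 n f tau1 p = (∂ᵧ^[n] f) p * tau1 p - n * I * (∂ᵧ^[n - 1] f) p := by
  rw [hirota_y_eq_iteratedDeriv, iteratedDeriv_mul_tau1]
  simp

theorem hirota_x_one (f : 𝒮) (m : ℕ) (p : ℝ × ℝ) :
    hirota m 0 (fun _ => 1) f p = (-1) ^ m * (∂ₓ^[m] f) p := by
  simp only [hirota_x_eq_iteratedDeriv, one_mul]
  exact iteratedDeriv_comp_sub_smul f p _ m

theorem hirota_y_one (f : 𝒮) (n : ℕ) (p : ℝ × ℝ) :
    hirota 0 n (fun _ => 1) f p = (-1) ^ n * (∂ᵧ^[n] f) p := by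
  simp only [hirota_y_eq_iteratedDeriv, one_mul]
  exact iteratedDeriv_comp_sub_smul f p _ n

noncomputable def smoothG1 (η : 𝒮) : 𝒮 :=
  -∂ₓ (∂ₓ η) + (1 / √3 : ℂ) • ∂ₓ η + (I / √3 : ℂ) • ∂ᵧ η

noncomputable def smoothL1 (φ : 𝒮) : 𝒮 :=
  smoothTau1 * (∂ₓ (∂ₓ φ) + (1 / √3 : ℂ) • ∂ₓ φ + (I / √3 : ℂ) • ∂ᵧ φ) - (2 : ℂ) • ∂ₓ φ

noncomputable def smoothPhi0 (φ η : 𝒮) : 𝒮 := smoothL1 φ - smoothG1 η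

theorem G1_eq_smoothG1 (η : 𝒮) : G1 η = smoothG1 η := by
  funext p
  simp only [G1, smoothG1, hirota_x_one, hirota_y_one, Function.iterate_succ_apply',
    Function.iterate_zero_apply, Subalgebra.coe_add, Subalgebra.coe_smul, Subalgebra.coe_neg,
    Pi.add_apply, Pi.smul_apply, Pi.neg_apply, smul_eq_mul]
  ring

theorem L1_eq_smoothL1 (φ : 𝒮) : L1 φ = smoothL1 φ := by
  funext p
  simp only [L1, smoothL1, hirota_x_tau1, hirota_y_tau1, Nat.sub_self,
    Function.iterate_succ_apply', Function.iterate_zero_apply, Subalgebra.coe_add,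
    Subalgebra.coe_sub, Subalgebra.coe_mul, Subalgebra.coe_smul, Pi.add_apply, Pi.sub_apply,
    Pi.mul_apply, Pi.smul_apply, smul_eq_mul, smoothTau1_apply]
  linear_combination (-φ p / √3) * I_sq

noncomputable def bilinearResidual (η : 𝒮) : 𝒮 :=
  smoothTau1 * (∂ₓ^[4] η - ∂ₓ^[2] η - ∂ᵧ^[2] η) - (4 : ℂ) • ∂ₓ^[3] η + (2 : ℂ) • ∂ₓ η
    + (2 * I) • ∂ᵧ η

/-- `τ₁` times the difference of the two sides of the third-order ODE for `φ`. -/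
noncomputable def odeResidual (φ η : 𝒮) : 𝒮 :=
  (4 : ℂ) • (smoothTau1 ^ 2 * ∂ₓ^[3] φ) + (2 * √3 : ℂ) • (smoothTau1 ^ 2 * ∂ₓ^[2] φ)
    - (12 : ℂ) • (smoothTau1 * ∂ₓ^[2] φ) - (4 * √3 : ℂ) • (smoothTau1 * ∂ₓ φ) + (12 : ℂ) • ∂ₓ φ
    + (2 : ℂ) • (smoothTau1 * ∂ₓ^[3] η) - (2 * √3 * I : ℂ) • (smoothTau1 * ∂ₓ (∂ᵧ η))
    + (6 : ℂ) • smoothG1 η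

theorem ofReal_sqrt_three_sq : ((√3 : ℝ) : ℂ) ^ 2 = 3 := by
  rw [← Complex.ofReal_pow, Real.sq_sqrt (by norm_num)]
  norm_num

theorem ofReal_sqrt_three_inv : ((√3 : ℝ) : ℂ)⁻¹ = √3 / 3 := by
  have h : ((√3 : ℝ) : ℂ) ≠ 0 := by simp
  field_simp
  exact ofReal_sqrt_three_sq.symm

theorem smoothPhi0_ode_of_residuals_eq_zero (φ η : 𝒮) (hkp : bilinearResidual η = 0)
    (hode : odeResidual φ η = 0) (p : ℝ × ℝ) :
    tau1 p ^ 3 * (∂ₓ^[3] (smoothPhi0 φ η)) p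
      = (-(√3 : ℂ) / 2 * tau1 p + 6) * tau1 p ^ 2 * (∂ₓ^[2] (smoothPhi0 φ η)) p
        + tau1 p * (2 * √3 * tau1 p - 15) * (∂ₓ (smoothPhi0 φ η)) p
        + (15 - 2 * √3 * tau1 p) * smoothPhi0 φ η p := by
  have h1 := congrArg (fun F : 𝒮 => F p) hode
  have h1x := congrArg (fun F : 𝒮 => ∂ₓ F p) hode
  have h1xx := congrArg (fun F : 𝒮 => ∂ₓ (∂ₓ F) p) hode
  have h1y := congrArg (fun F : 𝒮 => ∂ᵧ F p) hode
  have h2 := congrArg (fun F : 𝒮 => F p) hkp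
  have h2x := congrArg (fun F : 𝒮 => ∂ₓ F p) hkp
  simp only [smoothPhi0, odeResidual, bilinearResidual, smoothG1, smoothL1,
    Function.iterate_succ_apply', Function.iterate_zero_apply, Derivation.map_add,
    Derivation.map_sub, Derivation.map_neg, Derivation.map_smul, Derivation.map_zero,
    Derivation.leibniz, pow_two, dx_smoothTau1, dy_smoothTau1, Derivation.map_one_eq_zero,
    fderivDerivation_comm ((0 : ℝ), (1 : ℝ)) ((1 : ℝ), (0 : ℝ)), smul_eq_mul, Subalgebra.coe_add,
    Subalgebra.coe_sub, Subalgebra.coe_mul, Subalgebra.coe_smul, Subalgebra.coe_neg,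
    Subalgebra.coe_zero, Subalgebra.coe_one, Subalgebra.coe_algebraMap, Pi.add_apply, Pi.sub_apply,
    Pi.mul_apply, Pi.smul_apply, Pi.neg_apply, Pi.zero_apply, Pi.one_apply, Pi.algebraMap_apply,
    Algebra.algebraMap_self, RingHom.id_apply, smoothTau1_apply, div_eq_mul_inv, one_mul,
    ofReal_sqrt_three_inv] at h1 h1x h1xx h1y h2 h2x ⊢
  -- the combination vanishes only modulo `√3 ^ 2 = 3` and `I ^ 2 = -1`
  linear_combination (norm := (ring_nf; simp only [ofReal_sqrt_three_sq, I_sq, I_pow_three]; ring1))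
    (5 / 2 : ℂ) * h1 + (-(3 / 2) * tau1 p + √3 / 12 * tau1 p ^ 2) * h1x + tau1 p ^ 2 / 4 * h1xx
      + √3 * I / 12 * tau1 p ^ 2 * h1y - tau1 p * h2 + tau1 p ^ 2 / 2 * h2x

theorem bilinearResidual_apply (η : 𝒮) (p : ℝ × ℝ) :
    bilinearResidual η p = -hirota 2 0 η tau1 p + hirota 4 0 η tau1 p - hirota 0 2 η tau1 p := by
  simp only [bilinearResidual, hirota_x_tau1, hirota_y_tau1, Function.iterate_succ_apply',
    Function.iterate_zero_apply, Subalgebra.coe_add, Subalgebra.coe_sub, Subalgebra.coe_mul,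
    Subalgebra.coe_smul, Pi.add_apply, Pi.sub_apply, Pi.mul_apply, Pi.smul_apply, smul_eq_mul,
    smoothTau1_apply]
  ring

theorem odeResidual_apply (φ η : 𝒮) {p : ℝ × ℝ} (hp : tau1 p ≠ 0) :
    odeResidual φ η p = tau1 p *
      (4 * cdx (cdx (cdx φ)) p * tau1 p
        + (2 * (Real.sqrt 3 : ℂ) * tau1 p - 12) * cdx (cdx φ) p
        + (-4 * (Real.sqrt 3 : ℂ) + 12 / tau1 p) * cdx φ p
      - (-2 * cdx (cdx (cdx η)) p + 2 * (Real.sqrt 3 : ℂ) * I * cdx (cdy η) p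
        - 6 / tau1 p * G1 η p)) := by
  simp only [odeResidual, cdx_coe, cdy_coe, G1_eq_smoothG1, Function.iterate_succ_apply',
    Function.iterate_zero_apply, Subalgebra.coe_add, Subalgebra.coe_sub, Subalgebra.coe_mul,
    Subalgebra.coe_smul, Subalgebra.coe_pow, Pi.add_apply, Pi.sub_apply, Pi.mul_apply,
    Pi.smul_apply, Pi.pow_apply, smul_eq_mul, smoothTau1_apply]
  field_simp
  ring

theorem eq_neg_sqrt_three_of_tau1_eq_zero {p : ℝ × ℝ} (h : tau1 p = 0) : p = (-√3, 0) := by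
  have hre : p.1 + √3 = 0 := by simpa [tau1] using congrArg re h
  have him : p.2 = 0 := by simpa [tau1] using congrArg im h
  exact Prod.ext (by simp; linarith) him

theorem eq_zero_of_forall_tau1_ne_zero {F : 𝒮} (h : ∀ p, tau1 p ≠ 0 → F p = 0) : F = 0 := by
  have hdense : Dense {p : ℝ × ℝ | tau1 p ≠ 0} :=
    (dense_compl_singleton (-√3, 0)).mono fun p hp h0 =>
      Set.mem_compl_singleton_iff.1 hp (eq_neg_sqrt_three_of_tau1_eq_zero h0)
  exact Subtype.ext <| Continuous.ext_on hdense (contDiff_coe_smoothFunctions F).continuous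
    continuous_const h

/-- Compatibility: if `η` solves the linearized bilinear KP-I equation at `τ₁`
and `φ` solves the third-order ODE obtained by elimination, then
`Φ₀ = L₁φ − G₁η` solves an explicit homogeneous third-order ODE in `x`. -/
theorem Phi0_third_order_ode (η φ Φ₀ : ℝ × ℝ → ℂ)
    (hη : ContDiff ℝ (⊤ : ℕ∞) η) (hφ : ContDiff ℝ (⊤ : ℕ∞) φ)
    (hbil : ∀ p : ℝ × ℝ,
      -hirota 2 0 η tau1 p + hirota 4 0 η tau1 p - hirota 0 2 η tau1 p = 0)
    (hode : ∀ p : ℝ × ℝ, tau1 p ≠ 0 →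
      4 * cdx (cdx (cdx φ)) p * tau1 p
        + (2 * (Real.sqrt 3 : ℂ) * tau1 p - 12) * cdx (cdx φ) p
        + (-4 * (Real.sqrt 3 : ℂ) + 12 / tau1 p) * cdx φ p
      = -2 * cdx (cdx (cdx η)) p + 2 * (Real.sqrt 3 : ℂ) * I * cdx (cdy η) p
        - 6 / tau1 p * G1 η p)
    (hΦ₀ : Φ₀ = fun p => L1 φ p - G1 η p) :
    ∀ p : ℝ × ℝ, tau1 p ≠ 0 →
      cdx (cdx (cdx Φ₀)) p
        = (-(Real.sqrt 3 : ℂ) / 2 + 6 / tau1 p) * cdx (cdx Φ₀) p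
          + 1 / tau1 p * (2 * (Real.sqrt 3 : ℂ) - 15 / tau1 p) * cdx Φ₀ p
          + 1 / (tau1 p) ^ 2 * (15 / tau1 p - 2 * (Real.sqrt 3 : ℂ)) * Φ₀ p := by
  obtain ⟨η, rfl⟩ : ∃ η' : 𝒮, ⇑η' = η := ⟨⟨η, hη⟩, rfl⟩
  obtain ⟨φ, rfl⟩ : ∃ φ' : 𝒮, ⇑φ' = φ := ⟨⟨φ, hφ⟩, rfl⟩
  obtain rfl : Φ₀ = smoothPhi0 φ η := by
    rw [hΦ₀, L1_eq_smoothL1, G1_eq_smoothG1]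
    rfl
  have hkp : bilinearResidual η = 0 := by
    ext q
    exact (bilinearResidual_apply η q).trans (hbil q)
  have hres : odeResidual φ η = 0 := eq_zero_of_forall_tau1_ne_zero fun q hq => by
    rw [odeResidual_apply φ η hq, hode q hq, sub_self, mul_zero]
  intro p hp
  have key := smoothPhi0_ode_of_residuals_eq_zero φ η hkp hres p
  simp only [cdx_coe, Function.iterate_succ_apply', Function.iterate_zero_apply] at key ⊢
  linear_combination (norm := (field_simp; ring)) key / tau1 p ^ 3
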